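/- arXiv:2503.20728 — 2 statements merged into one kernel-verified Lean document; each statement's English description precedes it below -/
import Mathlib

section
/- Let H be a 2×2 Hermitian matrix with eigenvalues -1 and 1, and let U ∈ SU(2) with U ≠ ±I. If (V₁,θ₁) and (V₂,θ₂) in U(2)×ℝ satisfy exp(-i(θ₁/2) V₁ H V₁†) = U = exp(-i(θ₂/2) V₂ H V₂†), then the one-parameter sets {exp(-i(θ/2) V₁ H V₁†) : θ ∈ ℝ} and {exp(-i(θ/2) V₂ H V₂†) : θ ∈ ℝ} are equal. -/
set_option maxHeartbeats 1000000

open Matrix Complex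
open scoped Nat

attribute [local instance] Matrix.linftyOpNormedRing Matrix.linftyOpNormedAlgebra

lemma exp_idem (P : Matrix (Fin 2) (Fin 2) ℂ) (hP : P * P = P) (c : ℂ) :
    NormedSpace.exp (c • P) = 1 + (Complex.exp c - 1) • P := by
  have hpowP : ∀ n : ℕ, P ^ (n + 1) = P := by
    intro n
    induction n with
    | zero => simp
    | succ n ih => rw [pow_succ, ih, hP]
  have hpow : ∀ n : ℕ, (c • P) ^ (n + 1) = c ^ (n + 1) • P := by
    intro n; rw [smul_pow, hpowP]
  have hsc : Summable fun n : ℕ => ((n ! : ℂ)⁻¹) • c ^ n :=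
    NormedSpace.expSeries_summable' c
  have hsc' : Summable fun n : ℕ => (((n + 1)! : ℂ)⁻¹) • c ^ (n + 1) :=
    (summable_nat_add_iff 1).2 hsc
  have hexpc : Complex.exp c = 1 + ∑' n : ℕ, (((n + 1)! : ℂ)⁻¹) • c ^ (n + 1) := by
    rw [Complex.exp_eq_exp_ℂ, NormedSpace.exp_eq_tsum (𝕂 := ℂ)]
    beta_reduce
    rw [Summable.tsum_eq_zero_add hsc]
    simp
  have hs : Summable fun n : ℕ => ((n ! : ℂ)⁻¹) • (c • P) ^ n :=
    NormedSpace.expSeries_summable' (c • P)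
  rw [NormedSpace.exp_eq_tsum (𝕂 := ℂ)]
  beta_reduce
  rw [Summable.tsum_eq_zero_add hs]
  simp only [hpow, smul_smul]
  have : (∑' n : ℕ, ((((n + 1)! : ℂ)⁻¹) * c ^ (n + 1)) • P)
      = (∑' n : ℕ, (((n + 1)! : ℂ)⁻¹) * c ^ (n + 1)) • P := by
    rw [Summable.tsum_smul_const]
    simpa [smul_eq_mul] using hsc'
  rw [this]
  have h2 : (∑' n : ℕ, (((n + 1)! : ℂ)⁻¹) * c ^ (n + 1)) = Complex.exp c - 1 := by
    rw [hexpc]; simp [smul_eq_mul]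
  rw [h2]
  simp

lemma exp_invol (K : Matrix (Fin 2) (Fin 2) ℂ) (hK : K * K = 1) (c : ℂ) :
    NormedSpace.exp (c • K)
      = ((Complex.exp c + Complex.exp (-c)) / 2) • 1
        + ((Complex.exp c - Complex.exp (-c)) / 2) • K := by
  set P : Matrix (Fin 2) (Fin 2) ℂ := (2⁻¹ : ℂ) • (1 + K) with hPdef
  have hP : P * P = P := by
    rw [hPdef, smul_mul_smul_comm]
    simp only [mul_add, add_mul, one_mul, mul_one, hK]
    match_scalars <;> ring
  have hsplit : c • K = (2 * c) • P + (-c) • (1 : Matrix (Fin 2) (Fin 2) ℂ) := by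
    rw [hPdef, smul_smul]
    match_scalars <;> ring
  have hcomm : Commute ((2 * c) • P) ((-c) • (1 : Matrix (Fin 2) (Fin 2) ℂ)) :=
    ((Commute.one_right P).smul_left _).smul_right _
  have h1 : (1 : Matrix (Fin 2) (Fin 2) ℂ) + (Complex.exp (-c) - 1) • 1
      = Complex.exp (-c) • 1 := by match_scalars; ring
  have he : Complex.exp c = Complex.exp (2 * c) * Complex.exp (-c) := by
    rw [← Complex.exp_add]; ring_nf
  rw [hsplit, Matrix.exp_add_of_commute _ _ hcomm, exp_idem P hP, exp_idem 1 (by simp) (-c),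
    h1, he, mul_smul_comm, mul_one, hPdef]
  match_scalars <;> ring

lemma spec_root (M : Matrix (Fin 2) (Fin 2) ℂ) (μ : ℂ) (h : μ ∈ spectrum ℂ M) :
    (μ - M 0 0) * (μ - M 1 1) - M 0 1 * M 1 0 = 0 := by
  rw [spectrum.mem_iff] at h
  by_contra hne
  apply h
  rw [Matrix.isUnit_iff_isUnit_det]
  apply isUnit_iff_ne_zero.2
  have hdet : (algebraMap ℂ (Matrix (Fin 2) (Fin 2) ℂ) μ - M).det
      = (μ - M 0 0) * (μ - M 1 1) - M 0 1 * M 1 0 := by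
    rw [Matrix.det_fin_two]
    simp [Matrix.sub_apply, Matrix.algebraMap_matrix_apply]
  rw [hdet]
  exact hne

/-- Uniqueness of the one-parameter orbit: if `U ∈ SU(2)`, `U ≠ ±I`, and two pairs
`(V₁,θ₁)`, `(V₂,θ₂)` in `U(2) × ℝ` both represent `U` as `exp(-i(θ/2) V H V†)`, then the
corresponding one-parameter families coincide. -/
theorem stmt1 (H U V₁ V₂ : Matrix (Fin 2) (Fin 2) ℂ) (θ₁ θ₂ : ℝ)
    (hH : H.IsHermitian) (hspec : spectrum ℂ H = {-1, 1})
    (hU : U ∈ Matrix.unitaryGroup (Fin 2) ℂ) (hdet : U.det = 1)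
    (hU1 : U ≠ 1) (hU2 : U ≠ -1)
    (hV₁ : V₁ ∈ Matrix.unitaryGroup (Fin 2) ℂ)
    (hV₂ : V₂ ∈ Matrix.unitaryGroup (Fin 2) ℂ)
    (h1 : NormedSpace.exp ((-(Complex.I * (θ₁ / 2))) • (V₁ * H * V₁ᴴ)) = U)
    (h2 : NormedSpace.exp ((-(Complex.I * (θ₂ / 2))) • (V₂ * H * V₂ᴴ)) = U) :
    {A : Matrix (Fin 2) (Fin 2) ℂ |
        ∃ θ : ℝ, A = NormedSpace.exp ((-(Complex.I * (θ / 2))) • (V₁ * H * V₁ᴴ))} =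
      {A : Matrix (Fin 2) (Fin 2) ℂ |
        ∃ θ : ℝ, A = NormedSpace.exp ((-(Complex.I * (θ / 2))) • (V₂ * H * V₂ᴴ))} := by
  -- the spectrum conditions
  have e1 := spec_root H (-1) (by rw [hspec]; simp)
  have e2 := spec_root H 1 (by rw [hspec]; simp)
  have ht : H 0 0 + H 1 1 = 0 := by linear_combination (e1 - e2) / 2
  have hp : H 0 0 * H 1 1 - H 0 1 * H 1 0 = -1 := by linear_combination (e1 + e2) / 2
  have hHH : H * H = 1 := by
    ext i j
    fin_cases i <;> fin_cases j <;>
      simp [Matrix.mul_apply, Fin.sum_univ_two, Matrix.one_apply]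
    · linear_combination H 0 0 * ht - hp
    · linear_combination H 0 1 * ht
    · linear_combination H 1 0 * ht
    · linear_combination H 1 1 * ht - hp
  have htrH : Matrix.trace H = 0 := by rw [Matrix.trace_fin_two]; exact ht
  -- properties of K i := V i * H * (V i)ᴴ
  have hKK : ∀ V : Matrix (Fin 2) (Fin 2) ℂ, V ∈ Matrix.unitaryGroup (Fin 2) ℂ →
      (V * H * Vᴴ) * (V * H * Vᴴ) = 1 := by
    intro V hV
    have hVV : Vᴴ * V = 1 := by
      rw [← Matrix.star_eq_conjTranspose]; exact (Matrix.mem_unitaryGroup_iff').1 hV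
    have hVV' : V * Vᴴ = 1 := by
      rw [← Matrix.star_eq_conjTranspose]; exact (Matrix.mem_unitaryGroup_iff).1 hV
    simp only [Matrix.mul_assoc]
    rw [← Matrix.mul_assoc Vᴴ V (H * Vᴴ), hVV, one_mul, ← Matrix.mul_assoc H H Vᴴ, hHH,
      one_mul, hVV']
  have htrK : ∀ V : Matrix (Fin 2) (Fin 2) ℂ, V ∈ Matrix.unitaryGroup (Fin 2) ℂ →
      Matrix.trace (V * H * Vᴴ) = 0 := by
    intro V hV
    have hVV : Vᴴ * V = 1 := by
      rw [← Matrix.star_eq_conjTranspose]; exact (Matrix.mem_unitaryGroup_iff').1 hV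
    rw [Matrix.trace_mul_cycle, hVV, one_mul, htrH]
  set K₁ := V₁ * H * V₁ᴴ with hK₁def
  set K₂ := V₂ * H * V₂ᴴ with hK₂def
  have hKK₁ : K₁ * K₁ = 1 := hKK V₁ hV₁
  have hKK₂ : K₂ * K₂ = 1 := hKK V₂ hV₂
  set c₁ : ℂ := -(Complex.I * (θ₁ / 2)) with hc₁
  set c₂ : ℂ := -(Complex.I * (θ₂ / 2)) with hc₂
  set a₁ : ℂ := (Complex.exp c₁ + Complex.exp (-c₁)) / 2 with ha₁
  set b₁ : ℂ := (Complex.exp c₁ - Complex.exp (-c₁)) / 2 with hb₁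
  set a₂ : ℂ := (Complex.exp c₂ + Complex.exp (-c₂)) / 2 with ha₂
  set b₂ : ℂ := (Complex.exp c₂ - Complex.exp (-c₂)) / 2 with hb₂
  have h1' : a₁ • (1 : Matrix (Fin 2) (Fin 2) ℂ) + b₁ • K₁ = U := by
    rw [← h1, exp_invol K₁ hKK₁ c₁]
  have h2' : a₂ • (1 : Matrix (Fin 2) (Fin 2) ℂ) + b₂ • K₂ = U := by
    rw [← h2, exp_invol K₂ hKK₂ c₂]
  have hab₁ : a₁ ^ 2 - b₁ ^ 2 = 1 := by
    have : Complex.exp c₁ * Complex.exp (-c₁) = 1 := by rw [← Complex.exp_add]; simp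
    rw [ha₁, hb₁]; linear_combination this
  have hab₂ : a₂ ^ 2 - b₂ ^ 2 = 1 := by
    have : Complex.exp c₂ * Complex.exp (-c₂) = 1 := by rw [← Complex.exp_add]; simp
    rw [ha₂, hb₂]; linear_combination this
  -- traces give a₁ = a₂
  have htr : ∀ (a b : ℂ) (K : Matrix (Fin 2) (Fin 2) ℂ), Matrix.trace K = 0 →
      Matrix.trace (a • (1 : Matrix (Fin 2) (Fin 2) ℂ) + b • K) = 2 * a := by
    intro a b K hK
    rw [Matrix.trace_add, Matrix.trace_smul, Matrix.trace_smul, Matrix.trace_one, hK]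
    simp [mul_comm]
  have ha : a₁ = a₂ := by
    have t1 : Matrix.trace U = 2 * a₁ := by rw [← h1']; exact htr _ _ _ (htrK V₁ hV₁)
    have t2 : Matrix.trace U = 2 * a₂ := by rw [← h2']; exact htr _ _ _ (htrK V₂ hV₂)
    have := t1.symm.trans t2
    field_simp at this
    exact this
  -- b ≠ 0
  have hbne : ∀ (a b : ℂ) (K : Matrix (Fin 2) (Fin 2) ℂ),
      a • (1 : Matrix (Fin 2) (Fin 2) ℂ) + b • K = U → a ^ 2 - b ^ 2 = 1 → b ≠ 0 := by
    intro a b K hE hab hb0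
    rw [hb0] at hab hE
    have ha2 : (a - 1) * (a + 1) = 0 := by linear_combination hab
    rcases mul_eq_zero.1 ha2 with h | h
    · apply hU1
      rw [← hE, show a = 1 by linear_combination h]
      simp
    · apply hU2
      rw [← hE, show a = -1 by linear_combination h]
      simp
  have hb₁ne : b₁ ≠ 0 := hbne a₁ b₁ K₁ h1' hab₁
  have hb₂ne : b₂ ≠ 0 := hbne a₂ b₂ K₂ h2' hab₂
  -- b₁ • K₁ = b₂ • K₂
  have hb : b₁ • K₁ = b₂ • K₂ := by
    have h12 : a₁ • (1 : Matrix (Fin 2) (Fin 2) ℂ) + b₁ • K₁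
        = a₁ • (1 : Matrix (Fin 2) (Fin 2) ℂ) + b₂ • K₂ := by
      rw [h1', ha]
      exact h2'.symm
    exact add_left_cancel h12
  set r : ℂ := b₂⁻¹ * b₁ with hr
  have hK2 : K₂ = r • K₁ := by
    have : b₂⁻¹ • (b₂ • K₂) = b₂⁻¹ • (b₁ • K₁) := by rw [hb]
    rw [smul_smul, smul_smul, inv_mul_cancel₀ hb₂ne, one_smul] at this
    rw [this, hr]
  have hr2 : r ^ 2 = 1 := by
    have hm : K₂ * K₂ = (r • K₁) * (r • K₁) := by rw [← hK2]
    rw [hKK₂, Matrix.smul_mul, Matrix.mul_smul, smul_smul, hKK₁, ← pow_two] at hm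
    have := congrFun (congrFun hm 0) 0
    simpa [Matrix.one_apply] using this.symm
  have hrcases : K₂ = K₁ ∨ K₂ = -K₁ := by
    have : (r - 1) * (r + 1) = 0 := by linear_combination hr2
    rcases mul_eq_zero.1 this with h | h
    · left; rw [hK2, show r = 1 by linear_combination h, one_smul]
    · right; rw [hK2, show r = -1 by linear_combination h]
      simp
  -- conclude
  rcases hrcases with h | h
  · rw [h]
  · ext A
    simp only [Set.mem_setOf_eq]
    constructor
    · rintro ⟨θ, rfl⟩
      refine ⟨-θ, ?_⟩
      congr 1
      rw [h]
      match_scalars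
      push_cast
      ring
    · rintro ⟨θ, rfl⟩
      refine ⟨-θ, ?_⟩
      congr 1
      rw [h]
      match_scalars
      push_cast
      ring
end

section
/- Under the assumptions of the previous uniqueness setting (H Hermitian 2×2 with eigenvalues ±1, U ∈ SU(2), U ≠ ±I, and exp(-i(θ₁/2) V₁ H V₁†) = U = exp(-i(θ₂/2) V₂ H V₂†)), either V₁ H V₁† = V₂ H V₂† or V₁ H V₁† = -V₂ H V₂†. -/
open Matrix Complex Nat Polynomial

lemma mem_spectrum_iff_root' (M : Matrix (Fin 2) (Fin 2) ℂ) (μ : ℂ) :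
    μ ∈ spectrum ℂ M ↔ M.charpoly.IsRoot μ := by
  rw [spectrum.mem_iff, Matrix.isUnit_iff_isUnit_det, isUnit_iff_ne_zero, not_not,
    Polynomial.IsRoot, Matrix.charpoly, _root_.eval_det, Matrix.matPolyEquiv_charmatrix]
  simp only [eval_sub, eval_X, eval_C]
  have : (algebraMap ℂ (Matrix (Fin 2) (Fin 2) ℂ)) μ = Matrix.scalar (Fin 2) μ := rfl
  rw [this]

lemma step1 (M : Matrix (Fin 2) (Fin 2) ℂ) (hspec : spectrum ℂ M = {-1, 1}) :
    M * M = 1 ∧ M.trace = 0 := by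
  have hroots : M.charpoly.roots = {-1, 1} := by
    have hdeg : M.charpoly.natDegree = 2 := by simp
    have hcard : Multiset.card M.charpoly.roots = 2 := by
      have h := (Polynomial.splits_iff_card_roots.mp (IsAlgClosed.splits M.charpoly))
      rw [hdeg] at h; exact h
    have hne : M.charpoly ≠ 0 := M.charpoly_monic.ne_zero
    have h1 : (1 : ℂ) ∈ M.charpoly.roots := by
      rw [Polynomial.mem_roots hne, ← mem_spectrum_iff_root', hspec]; simp
    have hm1 : (-1 : ℂ) ∈ M.charpoly.roots := by
      rw [Polynomial.mem_roots hne, ← mem_spectrum_iff_root', hspec]; simp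
    have hle : ({-1, 1} : Multiset ℂ) ≤ M.charpoly.roots := by
      rw [Multiset.le_iff_count]
      intro a
      by_cases ha : a = -1
      · subst ha
        have h : Multiset.count (-1 : ℂ) ({-1, 1} : Multiset ℂ) = 1 := by
          norm_num [Multiset.insert_eq_cons, Multiset.count_cons, Multiset.count_singleton]
        rw [h]
        exact Multiset.one_le_count_iff_mem.mpr hm1
      by_cases hb : a = 1
      · subst hb
        have h : Multiset.count (1 : ℂ) ({-1, 1} : Multiset ℂ) = 1 := by
          norm_num [Multiset.insert_eq_cons, Multiset.count_cons, Multiset.count_singleton]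
        rw [h]
        exact Multiset.one_le_count_iff_mem.mpr h1
      · have h : Multiset.count a ({-1, 1} : Multiset ℂ) = 0 := by
          simp [Multiset.insert_eq_cons, Multiset.count_cons, Multiset.count_singleton, ha, hb]
        rw [h]; exact Nat.zero_le _
    exact (Multiset.eq_of_le_of_card_le hle (by rw [hcard]; rfl)).symm
  refine ⟨?_, ?_⟩
  · have hcp : M.charpoly = (X - C (-1)) * (X - C 1) := by
      have := (IsAlgClosed.splits M.charpoly).eq_prod_roots_of_monic
        M.charpoly_monic
      rw [hroots] at this
      simpa using this
    have hCH := M.aeval_self_charpoly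
    rw [hcp, _root_.map_mul] at hCH
    simp only [map_sub, Polynomial.aeval_X, Polynomial.aeval_C] at hCH
    have e1 : (algebraMap ℂ (Matrix (Fin 2) (Fin 2) ℂ)) 1 = 1 := map_one _
    have em1 : (algebraMap ℂ (Matrix (Fin 2) (Fin 2) ℂ)) (-1) = -1 := by
      rw [map_neg, e1]
    rw [e1, em1] at hCH
    have h2 : (M - -1) * (M - 1) = M * M - 1 := by noncomm_ring
    rw [h2] at hCH
    exact sub_eq_zero.mp hCH
  · have := M.trace_eq_sum_roots_charpoly
    rw [hroots] at this
    rw [this]; simp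


set_option maxHeartbeats 1000000 in
lemma exp_invol_s2 (A : Matrix (Fin 2) (Fin 2) ℂ) (hA : A * A = 1) (t : ℝ) :
    NormedSpace.exp ((-(Complex.I * t)) • A)
      = (Real.cos t : ℂ) • (1 : Matrix (Fin 2) (Fin 2) ℂ) - (Complex.I * Real.sin t) • A := by
  set c : ℂ := -(Complex.I * t) with hc_def
  have hA2 : A ^ 2 = 1 := by rw [sq, hA]
  have heven : ∀ k : ℕ, A ^ (2 * k) = 1 := fun k => by rw [pow_mul, hA2, one_pow]
  have hodd : ∀ k : ℕ, A ^ (2 * k + 1) = A := fun k => by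
    rw [pow_succ, pow_mul, hA2, one_pow, one_mul]
  have hcsq : c ^ 2 = -((t : ℂ) ^ 2) := by
    rw [hc_def]; ring_nf; rw [Complex.I_sq]; ring
  have hcpow : ∀ k : ℕ, c ^ (2 * k) = (-1) ^ k * (t : ℂ) ^ (2 * k) := by
    intro k
    rw [pow_mul, hcsq, neg_pow, ← pow_mul]
  rw [NormedSpace.exp_eq_tsum ℂ]
  refine HasSum.tsum_eq ?_
  have hcos : HasSum (fun k : ℕ => (((2 * k).factorial : ℂ)⁻¹) • (c • A) ^ (2 * k))
      ((Real.cos t : ℂ) • (1 : Matrix (Fin 2) (Fin 2) ℂ)) := by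
    have h := (Complex.hasSum_cos (t : ℂ)).smul_const (1 : Matrix (Fin 2) (Fin 2) ℂ)
    rw [← Complex.ofReal_cos] at h
    convert h using 1
    funext k
    have hfac : (((2 * k).factorial : ℂ)) ≠ 0 := Nat.cast_ne_zero.mpr (Nat.factorial_ne_zero _)
    rw [_root_.smul_pow, heven k, smul_smul]
    congr 1
    rw [hcpow k]
    ring
  have hsin : HasSum (fun k : ℕ => (((2 * k + 1).factorial : ℂ)⁻¹) • (c • A) ^ (2 * k + 1))
      (-((Complex.I * (Real.sin t : ℂ)) • A)) := by
    have h := ((Complex.hasSum_sin (t : ℂ)).mul_left (-Complex.I)).smul_const A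
    have hsum : (-Complex.I * Complex.sin (t : ℂ)) • A = -((Complex.I * (Real.sin t : ℂ)) • A) := by
      rw [← Complex.ofReal_sin, ← neg_smul]
      congr 1
      ring
    rw [hsum] at h
    convert h using 1
    funext k
    have hfac : (((2 * k + 1).factorial : ℂ)) ≠ 0 := Nat.cast_ne_zero.mpr (Nat.factorial_ne_zero _)
    rw [_root_.smul_pow, hodd k, smul_smul]
    congr 1
    rw [pow_succ, hcpow k, hc_def]
    ring
  rw [sub_eq_add_neg]
  exact HasSum.even_add_odd hcos hsin

lemma conj_invol (H V : Matrix (Fin 2) (Fin 2) ℂ) (hH2 : H * H = 1) (htr : H.trace = 0)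
    (hV : V ∈ Matrix.unitaryGroup (Fin 2) ℂ) :
    (V * H * Vᴴ) * (V * H * Vᴴ) = 1 ∧ (V * H * Vᴴ).trace = 0 := by
  have hVr : Vᴴ * V = 1 := by
    have := Matrix.mem_unitaryGroup_iff'.mp hV
    rwa [Matrix.star_eq_conjTranspose] at this
  have hVl : V * Vᴴ = 1 := by
    have := Matrix.mem_unitaryGroup_iff.mp hV
    rwa [Matrix.star_eq_conjTranspose] at this
  constructor
  · calc (V * H * Vᴴ) * (V * H * Vᴴ)
        = V * (H * ((Vᴴ * V) * (H * Vᴴ))) := by simp only [Matrix.mul_assoc]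
      _ = V * (H * (H * Vᴴ)) := by rw [hVr, one_mul]
      _ = (V * (H * H)) * Vᴴ := by simp only [Matrix.mul_assoc]
      _ = 1 := by rw [hH2, Matrix.mul_one, hVl]
  · rw [Matrix.trace_mul_comm (V * H) Vᴴ, ← Matrix.mul_assoc, hVr, one_mul, htr]

/-- Under the uniqueness setting: either `V₁ H V₁† = V₂ H V₂†` or `V₁ H V₁† = -V₂ H V₂†`. -/
theorem stmt2 (H U V₁ V₂ : Matrix (Fin 2) (Fin 2) ℂ) (θ₁ θ₂ : ℝ)
    (hH : H.IsHermitian) (hspec : spectrum ℂ H = {-1, 1})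
    (hU : U ∈ Matrix.unitaryGroup (Fin 2) ℂ) (hdet : U.det = 1)
    (hU1 : U ≠ 1) (hU2 : U ≠ -1)
    (hV₁ : V₁ ∈ Matrix.unitaryGroup (Fin 2) ℂ)
    (hV₂ : V₂ ∈ Matrix.unitaryGroup (Fin 2) ℂ)
    (h1 : NormedSpace.exp ((-(Complex.I * (θ₁ / 2))) • (V₁ * H * V₁ᴴ)) = U)
    (h2 : NormedSpace.exp ((-(Complex.I * (θ₂ / 2))) • (V₂ * H * V₂ᴴ)) = U) :
    V₁ * H * V₁ᴴ = V₂ * H * V₂ᴴ ∨ V₁ * H * V₁ᴴ = -(V₂ * H * V₂ᴴ) := by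
  obtain ⟨hH2, htr⟩ := step1 H hspec
  obtain ⟨hAA, htrA⟩ := conj_invol H V₁ hH2 htr hV₁
  obtain ⟨hBB, htrB⟩ := conj_invol H V₂ hH2 htr hV₂
  set A := V₁ * H * V₁ᴴ with hA_def
  set B := V₂ * H * V₂ᴴ with hB_def
  set t₁ : ℝ := θ₁ / 2 with ht₁
  set t₂ : ℝ := θ₂ / 2 with ht₂
  have key1 : U = (Real.cos t₁ : ℂ) • (1 : Matrix (Fin 2) (Fin 2) ℂ)
      - (Complex.I * Real.sin t₁) • A := by
    rw [← h1]
    have harg : (-(Complex.I * ((θ₁ : ℂ) / 2))) = (-(Complex.I * (t₁ : ℝ))) := by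
      push_cast [ht₁]; ring
    rw [harg, exp_invol_s2 A hAA t₁]
  have key2 : U = (Real.cos t₂ : ℂ) • (1 : Matrix (Fin 2) (Fin 2) ℂ)
      - (Complex.I * Real.sin t₂) • B := by
    rw [← h2]
    have harg : (-(Complex.I * ((θ₂ : ℂ) / 2))) = (-(Complex.I * (t₂ : ℝ))) := by
      push_cast [ht₂]; ring
    rw [harg, exp_invol_s2 B hBB t₂]
  have hkey := key1.symm.trans key2
  -- trace gives cos t₁ = cos t₂
  have hcos : (Real.cos t₁ : ℂ) = (Real.cos t₂ : ℂ) := by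
    have h := congrArg Matrix.trace hkey
    simp only [Matrix.trace_sub, Matrix.trace_smul, htrA, htrB, Matrix.trace_one, smul_zero,
      sub_zero, smul_eq_mul] at h
    have h2' : (Real.cos t₁ : ℂ) * 2 = (Real.cos t₂ : ℂ) * 2 := by
      simpa using h
    exact mul_right_cancel₀ two_ne_zero h2'
  have hsmul : (Complex.I * Real.sin t₁) • A = (Complex.I * Real.sin t₂) • B := by
    rw [hcos] at hkey
    exact sub_right_inj.mp hkey
  have hs : (Real.sin t₁ : ℂ) • A = (Real.sin t₂ : ℂ) • B := by
    have h := congrArg (fun M => (-Complex.I) • M) hsmul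
    simp only [smul_smul] at h
    have e : ∀ s : ℂ, -Complex.I * (Complex.I * s) = s := fun s => by
      rw [← mul_assoc, neg_mul, Complex.I_mul_I, neg_neg, one_mul]
    rwa [e, e] at h
  have hsq : ((Real.sin t₁ : ℂ)^2) • (1 : Matrix (Fin 2) (Fin 2) ℂ) = ((Real.sin t₂ : ℂ)^2) • 1 := by
    have h := congrArg (fun M => M * M) (hs)
    rw [smul_mul_assoc, smul_mul_assoc, mul_smul_comm, mul_smul_comm, hAA, hBB,
      smul_smul, smul_smul, ← sq, ← sq] at h
    exact h
  have hsqR : Real.sin t₁ ^ 2 = Real.sin t₂ ^ 2 := by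
    have h00 : (((Real.sin t₁ : ℂ)^2) • (1 : Matrix (Fin 2) (Fin 2) ℂ)) 0 0
        = (((Real.sin t₂ : ℂ)^2) • (1 : Matrix (Fin 2) (Fin 2) ℂ)) 0 0 := by rw [hsq]
    simp only [Matrix.smul_apply, Matrix.one_apply_eq, smul_eq_mul, mul_one] at h00
    exact_mod_cast h00
  by_cases hzero : Real.sin t₁ = 0
  · exfalso
    have hc2 : Real.cos t₁ ^ 2 = 1 := by nlinarith [Real.sin_sq_add_cos_sq t₁]
    have : (Real.cos t₁ - 1) * (Real.cos t₁ + 1) = 0 := by nlinarith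
    rcases mul_eq_zero.mp this with h | h
    · apply hU1
      rw [key1, hzero]
      have hc1 : Real.cos t₁ = 1 := by linarith
      simp [hc1]
    · apply hU2
      rw [key1, hzero]
      have hc1 : Real.cos t₁ = -1 := by linarith
      simp [hc1]
  · have hfac : (Real.sin t₁ - Real.sin t₂) * (Real.sin t₁ + Real.sin t₂) = 0 := by nlinarith
    rcases mul_eq_zero.mp hfac with h | h
    · left
      have heq : Real.sin t₂ = Real.sin t₁ := by linarith
      rw [heq] at hs
      exact smul_right_injective _ (by exact_mod_cast hzero) hs
    · right
      have heq : ((Real.sin t₂ : ℂ)) = -((Real.sin t₁ : ℂ)) := by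
        have : Real.sin t₂ = -Real.sin t₁ := by linarith
        exact_mod_cast congrArg (fun x : ℝ => (x : ℂ)) this
      rw [heq, neg_smul, ← smul_neg] at hs
      exact smul_right_injective _ (by exact_mod_cast hzero : (Real.sin t₁:ℂ) ≠ 0) hs
end
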